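/- Let p : E → B be a disk-hedgehog covering of path-connected spaces with X a Peano space, f : X → B continuous, x₀ ∈ X, e₀ ∈ E with f(x₀) = p(e₀) = b₀. Then f admits a continuous lift g : X → E with g(x₀) = e₀ and p ∘ g = f if and only if the image of the induced map π(X,x₀) → π(B,b₀) on hedgehog fundamental groups is contained in the image of π(E,e₀) → π(B,b₀). -/

import Mathlib

open unitInterval Topology

set_option linter.unnecessarySimpa false

universe u v w

/-- `p : E → B` is an arc-covering: unique lifting of paths given the initial point. -/
def IsArcCovering {E : Type*} {B : Type*} [TopologicalSpace E] [TopologicalSpace B]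
    (p : C(E, B)) : Prop :=
  ∀ (e₀ : E) (f : C(I, B)), f 0 = p e₀ →
    ∃! g : C(I, E), p.comp g = f ∧ g 0 = e₀

/-- The relation identifying the wedge points of a wedge of copies of `(A, a₀)` indexed by `S`. -/
def wedgeRel (S A : Type*) (a₀ : A) (x y : S × A) : Prop :=
  x = y ∨ (x.2 = a₀ ∧ y.2 = a₀)

/-- The wedge (one-point union) of copies of `(A, a₀)` indexed by `S`. -/
def Wedge (S A : Type*) (a₀ : A) : Type _ :=
  Quot (wedgeRel S A a₀)

/-- The topology of a directed wedge: a set is open iff its trace on each copy of `A`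
is open, and if it contains the wedge point then it contains all copies of `A`
beyond some index. -/
instance Wedge.instTopologicalSpace (S A : Type*) (a₀ : A) [Preorder S]
    [IsDirected S (· ≤ ·)] [TopologicalSpace A] : TopologicalSpace (Wedge S A a₀) where
  IsOpen U := (∀ s : S, IsOpen {a : A | Quot.mk (wedgeRel S A a₀) (s, a) ∈ U}) ∧
    ((∃ s : S, Quot.mk (wedgeRel S A a₀) (s, a₀) ∈ U) →
      ∃ t : S, ∀ s : S, t < s → ∀ a : A, Quot.mk (wedgeRel S A a₀) (s, a) ∈ U)
  isOpen_univ := by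
    refine ⟨fun s => ?_, fun h => ?_⟩
    · first | exact isOpen_univ | simp
    · obtain ⟨s, -⟩ := h
      exact ⟨s, fun _ _ _ => trivial⟩
  isOpen_inter := by
    rintro U V ⟨hU1, hU2⟩ ⟨hV1, hV2⟩
    refine ⟨fun s => (hU1 s).inter (hV1 s), fun h => ?_⟩
    obtain ⟨tU, htU⟩ := hU2 ⟨h.choose, h.choose_spec.1⟩
    obtain ⟨tV, htV⟩ := hV2 ⟨h.choose, h.choose_spec.2⟩
    obtain ⟨t, ht1, ht2⟩ := directed_of (· ≤ ·) tU tV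
    exact ⟨t, fun s hs a => ⟨htU s (lt_of_le_of_lt ht1 hs) a, htV s (lt_of_le_of_lt ht2 hs) a⟩⟩
  isOpen_sUnion := by
    intro C hC
    constructor
    · intro s
      have : {a : A | Quot.mk (wedgeRel S A a₀) (s, a) ∈ ⋃₀ C} =
          ⋃ U ∈ C, {a : A | Quot.mk (wedgeRel S A a₀) (s, a) ∈ U} := by
        ext a
        simp only [Set.mem_setOf_eq, Set.mem_sUnion, Set.mem_iUnion, exists_prop]
        exact Iff.rfl
      rw [this]
      exact isOpen_biUnion fun U hU => (hC U hU).1 s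
    · rintro ⟨s, hs⟩
      obtain ⟨U, hUC, hsU⟩ := hs
      obtain ⟨t, ht⟩ := (hC U hUC).2 ⟨s, hsU⟩
      exact ⟨t, fun s' hs' a => ⟨U, hUC, ht s' hs' a⟩⟩

/-- An arc-hedgehog over a directed set `S`: the directed wedge of copies of `([0,1], 0)`. -/
def ArcHedgehog (S : Type*) : Type _ := Wedge S I 0

instance (S : Type*) [Preorder S] [IsDirected S (· ≤ ·)] : TopologicalSpace (ArcHedgehog S) :=
  Wedge.instTopologicalSpace S I 0

/-- `p` is an arc-hedgehog covering: maps from arc-hedgehogs lift uniquely. -/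
def IsArcHedgehogCovering {E : Type*} {B : Type*} [TopologicalSpace E] [TopologicalSpace B]
    (p : C(E, B)) : Prop :=
  ∀ (S : Type u) [Preorder S] [IsDirected S (· ≤ ·)],
    ∀ (e₀ : E) (f : C(ArcHedgehog S, B)) (z₀ : ArcHedgehog S), f z₀ = p e₀ →
      ∃! g : C(ArcHedgehog S, E), p.comp g = f ∧ g z₀ = e₀

/-- The closed unit `2`-disk. -/
noncomputable def Disk : Type := Metric.closedBall (0 : EuclideanSpace ℝ (Fin 2)) 1

noncomputable instance : TopologicalSpace Disk := by unfold Disk; infer_instance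

/-- The center of the disk. -/
noncomputable def Disk.center : Disk := ⟨0, by simp⟩

/-- A disk-hedgehog over a directed set `S`: the directed wedge of copies of the pointed disk. -/
def DiskHedgehog (S : Type*) : Type _ := Wedge S Disk Disk.center

noncomputable instance (S : Type*) [Preorder S] [IsDirected S (· ≤ ·)] : TopologicalSpace (DiskHedgehog S) :=
  Wedge.instTopologicalSpace S Disk Disk.center

/-- `p` is a disk-hedgehog covering: maps from disk-hedgehogs lift uniquely. -/
def IsDiskHedgehogCovering {E : Type*} {B : Type*} [TopologicalSpace E] [TopologicalSpace B]
    (p : C(E, B)) : Prop :=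
  ∀ (S : Type u) [Preorder S] [IsDirected S (· ≤ ·)],
    ∀ (e₀ : E) (f : C(DiskHedgehog S, B)) (z₀ : DiskHedgehog S), f z₀ = p e₀ →
      ∃! g : C(DiskHedgehog S, E), p.comp g = f ∧ g z₀ = e₀

/-- `p` is a disk-covering: maps from the closed `2`-disk lift uniquely. -/
def IsDiskCovering {E : Type*} {B : Type*} [TopologicalSpace E] [TopologicalSpace B]
    (p : C(E, B)) : Prop :=
  ∀ (e₀ : E) (f : C(Disk, B)) (d₀ : Disk), f d₀ = p e₀ →
    ∃! g : C(Disk, E), p.comp g = f ∧ g d₀ = e₀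

/-- Path components of preimages of neighborhoods form a neighborhood basis of the
total space. -/
def HedgehogBasisCondition {E : Type*} {B : Type*} [TopologicalSpace E] [TopologicalSpace B]
    (p : C(E, B)) : Prop :=
  ∀ (e₀ : E) (U : Set E), IsOpen U → e₀ ∈ U →
    ∃ V ∈ 𝓝 (p e₀), {y : E | JoinedIn (p ⁻¹' V) e₀ y} ⊆ U

/-- The monodromy relation on loops at `b₀`: two loops are identified iff any two of
their lifts starting at the same point end at the same point. -/
def MonodromyRel {E : Type*} {B : Type*} [TopologicalSpace E] [TopologicalSpace B]
    (p : C(E, B)) (b₀ : B) (α β : Path b₀ b₀) : Prop :=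
  ∀ g h : C(I, E), (∀ t, p (g t) = α t) → (∀ t, p (h t) = β t) →
    g 0 = h 0 → g 1 = h 1

/-- `p` is regular: for each loop in `B`, all lifts are loops or all lifts are non-loops. -/
def IsRegularCovering {E : Type*} {B : Type*} [TopologicalSpace E] [TopologicalSpace B]
    (p : C(E, B)) : Prop :=
  ∀ (b : B) (α : Path b b) (g h : C(I, E)),
    (∀ t, p (g t) = α t) → (∀ t, p (h t) = α t) → g 0 = g 1 → h 0 = h 1

/-- Two loops `α, β` at `b₀` are monodromy-equivalent for the hedgehog fundamental
group iff for every disk-hedgehog covering with Peano total space, lifts of `α` and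
`β` starting at the same point end at the same point.  (This is the equality of the
classes of `α` and `β` in the monodromy group of the maximal disk-hedgehog covering.) -/
def HedgehogLoopEq {B : Type u} [TopologicalSpace B] (b₀ : B) (α β : C(I, B)) : Prop :=
  ∀ (E' : Type u) [TopologicalSpace E'] [ConnectedSpace E'] [LocallyPathConnectedSpace E']
    (q : C(E', B)), IsDiskHedgehogCovering.{u} q →
    ∀ g h : C(I, E'), (∀ t, q (g t) = α t) → (∀ t, q (h t) = β t) →
      g 0 = h 0 → g 1 = h 1

/-!
For `x : X` let `g x` be the endpoint of the lift, starting at `e₀`, of `f ∘ γ` for a path `γ`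
from `x₀` to `x`. This does not depend on `γ` because every lift starting at `e₀` of the image
of a loop at `x₀` is again a loop: hedgehog-equivalence with the image of a loop of `E` may be
tested on `E` retopologized as a Peano space, which is still a disk-hedgehog covering of `B`.
If `g` were discontinuous at `x`, paths from `x` to bad points in ever smaller neighbourhoods of
`x` would form a map from an arc-hedgehog to `B`; an arc-hedgehog is a retract of a
disk-hedgehog, so this map lifts, and continuity of the lift at the wedge point contradicts the
choice of the bad points. Conversely, a lift `g` turns a loop `λ` at `x₀` into the loop `g ∘ λ`
at `e₀`, and `p ∘ g ∘ λ = f ∘ λ`.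
-/

open Set Filter

section UniqueLifts

variable {E B A A' : Type*} [TopologicalSpace E] [TopologicalSpace B] [TopologicalSpace A]
  [TopologicalSpace A'] {p : C(E, B)}

def HasUniqueLifts (p : C(E, B)) (A : Type*) [TopologicalSpace A] : Prop :=
  ∀ (e₀ : E) (f : C(A, B)) (a₀ : A), f a₀ = p e₀ → ∃! g : C(A, E), p.comp g = f ∧ g a₀ = e₀

theorem HasUniqueLifts.of_retract (h : HasUniqueLifts p A) (i : C(A', A)) (r : C(A, A'))
    (hri : r.comp i = .id A') : HasUniqueLifts p A' := by
  have hri' : ∀ a, r (i a) = a := DFunLike.congr_fun hri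
  intro e₀ f a₀ hf
  obtain ⟨G, ⟨hG, hG₀⟩, hGu⟩ := h e₀ (f.comp r) (i a₀) (by simp [hri', hf])
  refine ⟨G.comp i, ⟨?_, hG₀⟩, fun g ⟨hg, hg₀⟩ => ?_⟩
  · rw [← ContinuousMap.comp_assoc, hG, ContinuousMap.comp_assoc, hri, ContinuousMap.comp_id]
  · have : g.comp r = G := hGu _ ⟨by rw [← ContinuousMap.comp_assoc, hg], by simp [hri', hg₀]⟩
    rw [← this, ContinuousMap.comp_assoc, hri, ContinuousMap.comp_id]

theorem HasUniqueLifts.isArcCovering (h : HasUniqueLifts p I) : IsArcCovering p :=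
  fun e₀ f => h e₀ f 0

end UniqueLifts

namespace Wedge

variable {S A A' : Type*} {a₀ : A} {a₀' : A'}

abbrev mk (a₀ : A) (s : S) (a : A) : Wedge S A a₀ := Quot.mk _ (s, a)

theorem mk_base_eq (s s' : S) : mk a₀ s a₀ = mk a₀ s' a₀ := Quot.sound (Or.inr ⟨rfl, rfl⟩)

variable [Preorder S] [IsDirected S (· ≤ ·)] [TopologicalSpace A] [TopologicalSpace A']

theorem isOpen_iff {U : Set (Wedge S A a₀)} :
    IsOpen U ↔ (∀ s, IsOpen {a | mk a₀ s a ∈ U}) ∧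
      ((∃ s, mk a₀ s a₀ ∈ U) → ∃ t, ∀ s, t < s → ∀ a, mk a₀ s a ∈ U) := Iff.rfl

def incl (a₀ : A) (s : S) : C(A, Wedge S A a₀) :=
  ⟨mk a₀ s, continuous_def.mpr fun _ hU => (isOpen_iff.mp hU).1 s⟩

def lift {Y : Type*} [TopologicalSpace Y] (F : S → C(A, Y)) (y₀ : Y) (hF : ∀ s, F s a₀ = y₀)
    (hF_tendsto : ∀ O : Set Y, IsOpen O → y₀ ∈ O → ∃ t, ∀ s, t < s → ∀ a, F s a ∈ O) :
    C(Wedge S A a₀, Y) where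
  toFun := Quot.lift (fun x => F x.1 x.2) <| by
    rintro ⟨s, a⟩ _ (rfl | ⟨rfl, h⟩)
    · rfl
    · exact (hF s).trans (h ▸ hF _).symm
  continuous_toFun := continuous_def.mpr fun O hO =>
    ⟨fun s => (F s).continuous.isOpen_preimage O hO,
      fun ⟨s, hs⟩ => hF_tendsto O hO (hF s ▸ hs)⟩

def map (φ : C(A, A')) (hφ : φ a₀ = a₀') : C(Wedge S A a₀, Wedge S A' a₀') where
  toFun := Quot.map (fun x => (x.1, φ x.2)) <| by
    rintro x _ (rfl | ⟨hx, hy⟩)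
    · exact Or.inl rfl
    · exact Or.inr ⟨hx ▸ hφ, hy ▸ hφ⟩
  continuous_toFun := continuous_def.mpr fun _ hU =>
    ⟨fun s => (hU.1 s).preimage φ.continuous, fun ⟨s, hs⟩ =>
      let ⟨t, ht⟩ := hU.2 ⟨s, hφ ▸ hs⟩
      ⟨t, fun s hs a => ht s hs (φ a)⟩⟩

theorem map_comp_map_eq_id {φ : C(A, A')} {ψ : C(A', A)} (hφ : φ a₀ = a₀') (hψ : ψ a₀' = a₀)
    (h : ψ.comp φ = .id A) : (map (S := S) ψ hψ).comp (map φ hφ) = .id _ := by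
  ext z
  induction z using Quot.ind
  exact congrArg (mk a₀ _) (DFunLike.congr_fun h _)

theorem locallyPathConnectedSpace [LocallyPathConnectedSpace A] [PathConnectedSpace A] :
    LocallyPathConnectedSpace (Wedge S A a₀) := by
  refine locallyPathConnectedSpace_iff_isOpen_pathComponentIn.mpr fun z W hW => ⟨fun s => ?_, ?_⟩
  · refine isOpen_iff_mem_nhds.mpr fun a (ha : mk a₀ s a ∈ pathComponentIn W z) => ?_
    have hWs : IsOpen {b | mk a₀ s b ∈ W} := hW.preimage (incl a₀ s).continuous
    have haW : a ∈ {b | mk a₀ s b ∈ W} := (pathComponentIn_subset ha : mk a₀ s a ∈ W)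
    refine mem_of_superset ((hWs.pathComponentIn a).mem_nhds (mem_pathComponentIn_self haW))
      (show _ ⊆ incl a₀ s ⁻¹' pathComponentIn W z from ?_)
    rw [← image_subset_iff, ← pathComponentIn_congr ha]
    exact ((isPathConnected_pathComponentIn haW).image (incl a₀ s).continuous)
      |>.subset_pathComponentIn ⟨a, mem_pathComponentIn_self haW, rfl⟩
        (image_subset_iff.mpr pathComponentIn_subset)
  · rintro ⟨s, hs : mk a₀ s a₀ ∈ pathComponentIn W z⟩
    obtain ⟨t, ht⟩ := (isOpen_iff.mp hW).2 ⟨s, pathComponentIn_subset hs⟩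
    refine ⟨t, fun s' hs' a => show mk a₀ s' a ∈ _ from ?_⟩
    rw [← pathComponentIn_congr hs]
    exact (isPathConnected_range (incl a₀ s').continuous).subset_pathComponentIn
      ⟨a₀, mk_base_eq s' s⟩ (range_subset_iff.mpr (ht s' hs')) ⟨a, rfl⟩

end Wedge

section Hedgehogs

instance : LocallyPathConnectedSpace I := (convex_Icc (0 : ℝ) 1).locallyPathConnectedSpace

noncomputable instance : LocallyPathConnectedSpace Disk :=
  (convex_closedBall (0 : EuclideanSpace ℝ (Fin 2)) 1).locallyPathConnectedSpace

noncomputable instance : PathConnectedSpace Disk :=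
  isPathConnected_iff_pathConnectedSpace.mp
    ((convex_closedBall (0 : EuclideanSpace ℝ (Fin 2)) 1).isPathConnected ⟨0, by simp⟩)

noncomputable instance (S : Type*) [Preorder S] [IsDirected S (· ≤ ·)] :
    LocallyPathConnectedSpace (DiskHedgehog S) :=
  Wedge.locallyPathConnectedSpace

noncomputable def diskToI : C(Disk, I) :=
  ⟨fun d => projIcc 0 1 zero_le_one (d.1 0), continuous_projIcc.comp (by fun_prop)⟩

noncomputable def iToDisk : C(I, Disk) :=
  ⟨fun t => ⟨(t : ℝ) • EuclideanSpace.single 0 1,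
    by simpa [norm_smul, abs_of_nonneg t.2.1] using t.2.2⟩, by fun_prop⟩

theorem diskToI_comp_iToDisk : diskToI.comp iToDisk = .id I := by
  ext t
  show (projIcc 0 1 zero_le_one (((t : ℝ) • EuclideanSpace.single (0 : Fin 2) (1 : ℝ)) 0) : ℝ) = t
  simp

theorem diskToI_center : diskToI Disk.center = 0 := by
  simp [diskToI, Disk.center]

theorem iToDisk_zero : iToDisk 0 = Disk.center := by
  apply Subtype.ext
  show ((0 : I) : ℝ) • EuclideanSpace.single (0 : Fin 2) (1 : ℝ) = 0
  simp

variable {E B : Type*} [TopologicalSpace E] [TopologicalSpace B] {p : C(E, B)}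

theorem IsDiskHedgehogCovering.hasUniqueLifts_arcHedgehog (hp : IsDiskHedgehogCovering.{u} p)
    (S : Type u) [Preorder S] [IsDirected S (· ≤ ·)] : HasUniqueLifts p (ArcHedgehog S) :=
  HasUniqueLifts.of_retract (hp S) (Wedge.map iToDisk iToDisk_zero)
    (Wedge.map diskToI diskToI_center) (Wedge.map_comp_map_eq_id _ _ diskToI_comp_iToDisk)

theorem IsDiskHedgehogCovering.isArcCovering (hp : IsDiskHedgehogCovering.{u} p) :
    IsArcCovering p :=
  HasUniqueLifts.isArcCovering <| (hp.hasUniqueLifts_arcHedgehog PUnit.{u + 1}).of_retract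
    (Wedge.incl 0 .unit)
    (Wedge.lift (fun _ => .id I) 0 (fun _ => rfl) fun _ _ _ =>
      ⟨.unit, fun _ hs => (hs.ne (Subsingleton.elim _ _)).elim⟩)
    rfl

end Hedgehogs

section PathLifting

variable {E B X : Type*} [TopologicalSpace E] [TopologicalSpace B] [TopologicalSpace X]
  {p : C(E, B)}

theorem IsArcCovering.lift_unique (hp : IsArcCovering p) {Γ₁ Γ₂ : C(I, E)}
    (h : ∀ t, p (Γ₁ t) = p (Γ₂ t)) (h₀ : Γ₁ 0 = Γ₂ 0) : Γ₁ = Γ₂ :=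
  (hp (Γ₂ 0) (p.comp Γ₂) rfl).unique ⟨ContinuousMap.ext h, h₀⟩ ⟨rfl, rfl⟩

theorem IsArcCovering.exists_path_lift (hp : IsArcCovering p) (f : C(X, B)) {x x' : X}
    (γ : Path x x') {e : E} (he : p e = f x) : ∃ e', ∃ Γ : Path e e', ∀ t, p (Γ t) = f (γ t) := by
  obtain ⟨Γ, ⟨hΓ, hΓ₀⟩, -⟩ := hp e (f.comp γ.toContinuousMap) (by simp [he])
  exact ⟨Γ 1, ⟨Γ, hΓ₀, rfl⟩, DFunLike.congr_fun hΓ⟩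

theorem Path.apply_trans_eq_apply_trans {Y Z : Type*} [TopologicalSpace Y] {φ : X → Z}
    {ψ : Y → Z} {x₀ x₁ x₂ : X} {y₀ y₁ y₂ : Y} {γ : Path x₀ x₁} {γ' : Path x₁ x₂}
    {δ : Path y₀ y₁} {δ' : Path y₁ y₂} (h : ∀ t, φ (γ t) = ψ (δ t))
    (h' : ∀ t, φ (γ' t) = ψ (δ' t)) (t : I) : φ (γ.trans γ' t) = ψ (δ.trans δ' t) := by
  simp only [Path.trans_apply]
  split_ifs
  exacts [h _, h' _]

theorem IsArcCovering.eq_of_lifts_of_forall_loop (hp : IsArcCovering p) {f : C(X, B)}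
    {x₀ : X} {e₀ : E}
    (hloop : ∀ (ℓ : Path x₀ x₀) ⦃e : E⦄ (Λ : Path e₀ e), (∀ t, p (Λ t) = f (ℓ t)) → e = e₀)
    {x : X} {γ₁ γ₂ : Path x₀ x} {e₁ e₂ : E} {Γ₁ : Path e₀ e₁} {Γ₂ : Path e₀ e₂}
    (h₁ : ∀ t, p (Γ₁ t) = f (γ₁ t)) (h₂ : ∀ t, p (Γ₂ t) = f (γ₂ t)) : e₁ = e₂ := by
  obtain ⟨e₃, Δ, hΔ⟩ := hp.exists_path_lift f γ₂.symm (by simpa using h₁ 1)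
  obtain rfl : e₃ = e₀ := hloop _ _ (Path.apply_trans_eq_apply_trans h₁ hΔ)
  have : Δ.symm.toContinuousMap = Γ₂.toContinuousMap :=
    hp.lift_unique (fun t => by simpa [h₂] using hΔ (σ t)) (by simp)
  simpa using congr($this 1)

end PathLifting

section Peanification

abbrev LocPathConnectedSpaces : Type (u + 1) :=
  {Z : TopCat.{u} // LocallyPathConnectedSpace Z}

instance (Z : LocPathConnectedSpaces.{u}) : LocallyPathConnectedSpace Z.1 := Z.2

/-- The locally path-connected coreflection of `E`: it has the same paths and the same maps from
disk-hedgehogs as `E`. -/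
abbrev Peanification (E : Type u) [TopologicalSpace E] : Type u :=
  WithGeneratedByTopology (fun Z : LocPathConnectedSpaces.{u} => Z.1) E

theorem Topology.IsGeneratedBy.locallyPathConnectedSpace {ι : Type*} {X : ι → Type*}
    [∀ i, TopologicalSpace (X i)] [∀ i, LocallyPathConnectedSpace (X i)]
    {Y : Type*} [TopologicalSpace Y] [IsGeneratedBy X Y] : LocallyPathConnectedSpace Y := by
  rw [← IsGeneratedBy.generatedBy_eq (X := X) (Y := Y), TopologicalSpace.generatedBy_eq_coinduced]
  exact LocallyPathConnectedSpace.coinduced _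

instance isGeneratedBy_locPathConnectedSpaces (Z : Type u) [TopologicalSpace Z]
    [LocallyPathConnectedSpace Z] : IsGeneratedBy (fun Z : LocPathConnectedSpaces.{u} => Z.1) Z :=
  inferInstanceAs (IsGeneratedBy _ (⟨TopCat.of Z, ‹_›⟩ : LocPathConnectedSpaces.{u}).1)

instance isGeneratedBy_locPathConnectedSpaces_unitInterval :
    IsGeneratedBy (fun Z : LocPathConnectedSpaces.{u} => Z.1) I :=
  have : LocallyPathConnectedSpace (ULift.{u} I) :=
    Homeomorph.ulift.isOpenEmbedding.locallyPathConnectedSpace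
  Homeomorph.ulift.isQuotientMap.isGeneratedBy (Y := ULift.{u} I)

variable {E B : Type u} [TopologicalSpace E] [TopologicalSpace B]

def Peanification.proj : C(Peanification E, E) :=
  ⟨WithGeneratedByTopology.equiv, WithGeneratedByTopology.continuous_equiv⟩

theorem Peanification.proj_injective : Function.Injective (proj : Peanification E → E) :=
  WithGeneratedByTopology.equiv.injective

def ContinuousMap.toPeanification {Z : Type*} [TopologicalSpace Z]
    [IsGeneratedBy (fun Z : LocPathConnectedSpaces.{u} => Z.1) Z] (g : C(Z, E)) :
    C(Z, Peanification E) :=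
  ⟨WithGeneratedByTopology.equiv.symm ∘ g,
    (IsGeneratedBy.equiv_symm_comp_continuous_iff _ _).mpr g.continuous⟩

@[simp] theorem Peanification.proj_toPeanification {Z : Type*} [TopologicalSpace Z]
    [IsGeneratedBy (fun Z : LocPathConnectedSpaces.{u} => Z.1) Z] (g : C(Z, E)) (z : Z) :
    proj (g.toPeanification z) = g z :=
  rfl

instance : LocallyPathConnectedSpace (Peanification E) :=
  IsGeneratedBy.locallyPathConnectedSpace (X := fun Z : LocPathConnectedSpaces.{u} => Z.1)

instance [PathConnectedSpace E] : PathConnectedSpace (Peanification E) where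
  nonempty := ⟨WithGeneratedByTopology.equiv.symm (Classical.arbitrary E)⟩
  joined x y :=
    let γ := PathConnectedSpace.somePath (Peanification.proj x) (Peanification.proj y)
    ⟨⟨γ.toContinuousMap.toPeanification, γ.source, γ.target⟩⟩

theorem HasUniqueLifts.peanification {p : C(E, B)} {A : Type*} [TopologicalSpace A]
    [IsGeneratedBy (fun Z : LocPathConnectedSpaces.{u} => Z.1) A] (h : HasUniqueLifts p A) :
    HasUniqueLifts (p.comp Peanification.proj) A := by
  intro e₀ f a₀ hf
  obtain ⟨G, ⟨hG, hG₀⟩, hGu⟩ := h _ f a₀ hf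
  refine ⟨G.toPeanification, ⟨hG, Peanification.proj_injective (by simpa using hG₀)⟩,
    fun G' ⟨hG', hG'₀⟩ => ?_⟩
  have : Peanification.proj.comp G' = G := hGu _ ⟨hG', hG'₀⟩
  ext a
  exact Peanification.proj_injective (by simpa using DFunLike.congr_fun this a)

theorem hedgehogLoopEq_refl (b₀ : B) (α : C(I, B)) : HedgehogLoopEq b₀ α α :=
  fun _ _ _ _ _ hq _ _ hg hh h₀ =>
    congr($(hq.isArcCovering.lift_unique (fun t => (hg t).trans (hh t).symm) h₀) 1)

theorem HedgehogLoopEq.lift_target_eq [PathConnectedSpace E] {p : C(E, B)} {b₀ : B}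
    {α β : C(I, B)} (h : HedgehogLoopEq b₀ α β) (hp : IsDiskHedgehogCovering.{u} p)
    {g k : C(I, E)} (hg : ∀ t, p (g t) = α t) (hk : ∀ t, p (k t) = β t) (h₀ : g 0 = k 0) :
    g 1 = k 1 :=
  congrArg Peanification.proj <| h (Peanification E) (p.comp Peanification.proj)
    (fun S _ _ => HasUniqueLifts.peanification (hp S)) g.toPeanification k.toPeanification hg hk
    (Peanification.proj_injective (by simpa using h₀))

end Peanification

section Lifting

/-- Neighbourhoods of `x` ordered by reverse inclusion. The counter `n` gives every index a strict
successor: the topology of a wedge only controls the spines strictly beyond an index. -/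
structure NhdsIndex {X : Type u} [TopologicalSpace X] (x : X) : Type u where
  set : Set X
  mem_nhds : set ∈ 𝓝 x
  n : ℕ

namespace NhdsIndex

variable {X : Type u} [TopologicalSpace X] {x : X}

instance : Preorder (NhdsIndex x) := Preorder.lift fun s => (OrderDual.toDual s.set, s.n)

instance : IsDirected (NhdsIndex x) (· ≤ ·) :=
  ⟨fun s t => ⟨⟨s.set ∩ t.set, inter_mem s.mem_nhds t.mem_nhds, max s.n t.n⟩,
    ⟨inter_subset_left, le_max_left _ _⟩, ⟨inter_subset_right, le_max_right _ _⟩⟩⟩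

def succ (s : NhdsIndex x) : NhdsIndex x := ⟨s.set, s.mem_nhds, s.n + 1⟩

theorem lt_succ (s : NhdsIndex x) : s < s.succ :=
  Prod.lt_iff.mpr (Or.inr ⟨le_rfl, Nat.lt_succ_self _⟩)

end NhdsIndex

variable {E B X : Type u} [TopologicalSpace E] [TopologicalSpace B] [TopologicalSpace X]
  [LocallyPathConnectedSpace X] {p : C(E, B)}

theorem continuous_of_forall_path_lift (hp : IsDiskHedgehogCovering.{u} p) {f : C(X, B)}
    {g : X → E} (hpg : ∀ x, p (g x) = f x)
    (hg : ∀ ⦃x y : X⦄ (γ : Path x y) ⦃e : E⦄ (Γ : Path (g x) e),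
      (∀ t, p (Γ t) = f (γ t)) → e = g y) :
    Continuous g := by
  refine continuous_iff_continuousAt.mpr fun x => (nhds_basis_opens _).tendsto_right_iff.mpr ?_
  rintro U ⟨hxU, hU⟩
  by_contra hbad
  have hpaths : ∀ s : NhdsIndex x, ∃ y, ∃ c : Path x y, (∀ t, c t ∈ s.set) ∧ g y ∉ U := by
    intro s
    obtain ⟨y, ⟨c, hc⟩, hyU⟩ := not_subset.mp fun h =>
      hbad (mem_of_superset (pathComponentIn_mem_nhds s.mem_nhds) h)
    exact ⟨y, c, hc, hyU⟩
  choose y c hc hyU using hpaths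
  let F : C(ArcHedgehog (NhdsIndex x), B) :=
    Wedge.lift (fun s => f.comp (c s).toContinuousMap) (f x) (fun s => by simp)
      fun O hO hxO => ⟨⟨f ⁻¹' O, f.continuous.continuousAt (hO.mem_nhds hxO), 0⟩,
        fun s hs t => hs.le.1 (hc s t)⟩
  let s₀ : NhdsIndex x := ⟨univ, univ_mem, 0⟩
  obtain ⟨G, hG, hG₀⟩ := (hp.hasUniqueLifts_arcHedgehog _ (g x) F (Wedge.mk 0 s₀ 0)
    (show f (c s₀ 0) = p (g x) by rw [hpg, Path.source])).exists
  have hGy : ∀ s, G (Wedge.mk 0 s 1) = g (y s) := fun s =>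
    hg (c s) ⟨G.comp (Wedge.incl 0 s), (congrArg G (Wedge.mk_base_eq s s₀)).trans hG₀, rfl⟩
      fun t => DFunLike.congr_fun hG (Wedge.mk 0 s t)
  obtain ⟨t, ht⟩ :=
    (Wedge.isOpen_iff.mp (hU.preimage G.continuous)).2 ⟨s₀, show G _ ∈ U by rwa [hG₀]⟩
  exact hyU t.succ (hGy t.succ ▸ (ht _ t.lt_succ 1 : G (Wedge.mk 0 t.succ 1) ∈ U))

theorem IsDiskHedgehogCovering.exists_lift [PathConnectedSpace X]
    (hp : IsDiskHedgehogCovering.{u} p) (f : C(X, B)) {x₀ : X} {e₀ : E} (hf : f x₀ = p e₀)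
    (hloop : ∀ (ℓ : Path x₀ x₀) ⦃e : E⦄ (Λ : Path e₀ e), (∀ t, p (Λ t) = f (ℓ t)) → e = e₀) :
    ∃ g : C(X, E), p.comp g = f ∧ g x₀ = e₀ := by
  have hp' := hp.isArcCovering
  choose g Γ hΓ using fun x => hp'.exists_path_lift f (PathConnectedSpace.somePath x₀ x) hf.symm
  have hg : ∀ ⦃x⦄ (γ : Path x₀ x) ⦃e⦄ (Λ : Path e₀ e), (∀ t, p (Λ t) = f (γ t)) → e = g x :=
    fun x _ _ _ hΛ => hp'.eq_of_lifts_of_forall_loop hloop hΛ (hΓ x)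
  have hpg : ∀ x, p (g x) = f x := fun x => by simpa using hΓ x 1
  refine ⟨⟨g, continuous_of_forall_path_lift hp hpg fun x _ γ _ Λ hΛ =>
    hg ((PathConnectedSpace.somePath x₀ x).trans γ) ((Γ x).trans Λ)
      (Path.apply_trans_eq_apply_trans (hΓ x) hΛ)⟩, ContinuousMap.ext hpg, ?_⟩
  exact (hg (Path.refl x₀) (Path.refl e₀) fun _ => hf.symm).symm

end Lifting

theorem lifting_criterion_general {X E B : Type u} [TopologicalSpace X] [TopologicalSpace E]
    [TopologicalSpace B] [ConnectedSpace X] [LocallyPathConnectedSpace X]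
    [PathConnectedSpace E]
    (p : C(E, B)) (hp : IsDiskHedgehogCovering.{u} p)
    (f : C(X, B)) (x₀ : X) (e₀ : E) (hf : f x₀ = p e₀) :
    (∃ g : C(X, E), p.comp g = f ∧ g x₀ = e₀) ↔
      (∀ lam : C(I, X), lam 0 = x₀ → lam 1 = x₀ →
        ∃ μ : C(I, E), μ 0 = e₀ ∧ μ 1 = e₀ ∧
          HedgehogLoopEq (p e₀) (f.comp lam) (p.comp μ)) := by
  constructor
  · rintro ⟨g, rfl, rfl⟩ lam hlam₀ hlam₁
    exact ⟨g.comp lam, by simp [hlam₀], by simp [hlam₁], hedgehogLoopEq_refl _ _⟩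
  · intro h
    have : PathConnectedSpace X := pathConnectedSpace_iff_connectedSpace.mpr ‹_›
    refine hp.exists_lift f hf fun ℓ e Λ hΛ => ?_
    obtain ⟨μ, hμ₀, hμ₁, hμ⟩ := h ℓ ℓ.source ℓ.target
    have := hμ.lift_target_eq hp (g := Λ.toContinuousMap) hΛ (fun _ => rfl) (by simp [hμ₀])
    simpa [hμ₁] using this

/-- lifting criterion for disk-hedgehog coverings in terms of hedgehog
fundamental groups: a map `f : X → B` from a Peano space lifts iff the image of
`π(X, x₀)` in `π(B, b₀)` is contained in the image of `π(E, e₀)`. -/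
theorem lifting_criterion {X E B : Type u} [TopologicalSpace X] [TopologicalSpace E]
    [TopologicalSpace B] [ConnectedSpace X] [LocallyPathConnectedSpace X]
    [PathConnectedSpace E] [PathConnectedSpace B]
    (p : C(E, B)) (hp : IsDiskHedgehogCovering.{u} p)
    (f : C(X, B)) (x₀ : X) (e₀ : E) (hf : f x₀ = p e₀) :
    (∃ g : C(X, E), p.comp g = f ∧ g x₀ = e₀) ↔
      (∀ lam : C(I, X), lam 0 = x₀ → lam 1 = x₀ →
        ∃ μ : C(I, E), μ 0 = e₀ ∧ μ 1 = e₀ ∧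
          HedgehogLoopEq (p e₀) (f.comp lam) (p.comp μ)) :=
  lifting_criterion_general p hp f x₀ e₀ hf
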